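/- For any word w in a free group on generators α₁,…,α_m and any prime p, the Magnus expansion of w^p is congruent, modulo the ideal generated by p in the power series ring ℤ⟨⟨X₁,…,X_m⟩⟩, to 1 plus terms of degree at least p. -/

import Mathlib

/-! Non-commutative formal power series in `m` variables over a ring `A`,
modeled as functions from words (lists of variable indices) to `A`. -/

def NCS (A : Type) (m : ℕ) : Type := List (Fin m) → A

namespace NCS

variable {A : Type} [Ring A] {m : ℕ}


instance : AddCommGroup (NCS A m) := Pi.addCommGroup

def mulFun (f g : NCS A m) : NCS A m :=
  fun w => ∑ i ∈ Finset.range (w.length + 1), f (w.take i) * g (w.drop i)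

def oneFun : NCS A m := fun w => if w = [] then (1 : A) else 0

lemma mulFun_assoc (f g h : NCS A m) : mulFun (mulFun f g) h = mulFun f (mulFun g h) := by
  funext w
  show ∑ i ∈ Finset.range (w.length + 1),
      (∑ j ∈ Finset.range ((w.take i).length + 1), f ((w.take i).take j) * g ((w.take i).drop j))
        * h (w.drop i)
    = ∑ j ∈ Finset.range (w.length + 1),
        f (w.take j) * ∑ k ∈ Finset.range ((w.drop j).length + 1),
          g ((w.drop j).take k) * h ((w.drop j).drop k)
  set n := w.length with hn
  calc
    ∑ i ∈ Finset.range (n + 1),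
        (∑ j ∈ Finset.range ((w.take i).length + 1), f ((w.take i).take j) * g ((w.take i).drop j))
          * h (w.drop i)
      = ∑ i ∈ Finset.range (n + 1), ∑ j ∈ Finset.range (i + 1),
          f (w.take j) * (g ((w.drop j).take (i - j)) * h (w.drop i)) := by
        refine Finset.sum_congr rfl (fun i hi => ?_)
        have hi' : i ≤ n := Nat.lt_succ_iff.mp (Finset.mem_range.mp hi)
        have hlen : (w.take i).length = i := by
          simp only [List.length_take]; omega
        rw [hlen, Finset.sum_mul]
        refine Finset.sum_congr rfl (fun j hj => ?_)
        have hj' : j ≤ i := Nat.lt_succ_iff.mp (Finset.mem_range.mp hj)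
        rw [List.take_take, Nat.min_eq_left hj', List.drop_take, mul_assoc]
    _ = ∑ j ∈ Finset.range (n + 1), ∑ i ∈ Finset.Ico j (n + 1),
          f (w.take j) * (g ((w.drop j).take (i - j)) * h (w.drop i)) := by
        refine Finset.sum_comm' ?_
        intro i j
        simp only [Finset.mem_range, Finset.mem_Ico]
        omega
    _ = ∑ j ∈ Finset.range (n + 1),
          f (w.take j) * ∑ k ∈ Finset.range ((w.drop j).length + 1),
            g ((w.drop j).take k) * h ((w.drop j).drop k) := by
        refine Finset.sum_congr rfl (fun j hj => ?_)
        have hj' : j ≤ n := Nat.lt_succ_iff.mp (Finset.mem_range.mp hj)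
        rw [Finset.sum_Ico_eq_sum_range, Finset.mul_sum]
        have hlen : (w.drop j).length = n - j := by simp [List.length_drop, hn]
        rw [hlen]
        have : n + 1 - j = n - j + 1 := by omega
        rw [this]
        refine Finset.sum_congr rfl (fun k hk => ?_)
        rw [Nat.add_sub_cancel_left, List.drop_drop]

lemma oneFun_mulFun (f : NCS A m) : mulFun oneFun f = f := by
  funext w
  show ∑ i ∈ Finset.range (w.length + 1), oneFun (w.take i) * f (w.drop i) = f w
  rw [Finset.sum_eq_single 0]
  · show oneFun ([] : List (Fin m)) * f w = f w
    simp [oneFun]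
  · intro i hi hne
    have hi' : i < w.length + 1 := Finset.mem_range.mp hi
    have hw : w ≠ [] := by
      intro h; subst h; simp at hi'; omega
    have : oneFun (w.take i) = (0 : A) := by
      unfold oneFun
      rw [if_neg]
      rw [List.take_eq_nil_iff]
      push_neg
      exact ⟨hne, hw⟩
    rw [this, zero_mul]
  · intro h
    exact absurd (Finset.mem_range.mpr (Nat.succ_pos _)) h

lemma mulFun_oneFun (f : NCS A m) : mulFun f oneFun = f := by
  funext w
  show ∑ i ∈ Finset.range (w.length + 1), f (w.take i) * oneFun (w.drop i) = f w
  rw [Finset.sum_eq_single w.length]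
  · rw [List.take_length, List.drop_length]
    show f w * (if ([] : List (Fin m)) = [] then (1:A) else 0) = f w
    simp
  · intro i hi hne
    have hi' : i < w.length + 1 := Finset.mem_range.mp hi
    have : oneFun (w.drop i) = (0 : A) := by
      unfold oneFun
      rw [if_neg]
      rw [List.drop_eq_nil_iff]
      omega
    rw [this, mul_zero]
  · intro h
    exact absurd (Finset.mem_range.mpr (Nat.lt_succ_self _)) h

lemma mulFun_add (f g h : NCS A m) : mulFun f (g + h) = mulFun f g + mulFun f h := by
  funext w
  show ∑ i ∈ Finset.range (w.length + 1), f (w.take i) * (g (w.drop i) + h (w.drop i))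
    = (∑ i ∈ Finset.range (w.length + 1), f (w.take i) * g (w.drop i))
      + ∑ i ∈ Finset.range (w.length + 1), f (w.take i) * h (w.drop i)
  rw [← Finset.sum_add_distrib]
  exact Finset.sum_congr rfl fun i _ => mul_add _ _ _

lemma add_mulFun (f g h : NCS A m) : mulFun (f + g) h = mulFun f h + mulFun g h := by
  funext w
  show ∑ i ∈ Finset.range (w.length + 1), (f (w.take i) + g (w.take i)) * h (w.drop i)
    = (∑ i ∈ Finset.range (w.length + 1), f (w.take i) * h (w.drop i))
      + ∑ i ∈ Finset.range (w.length + 1), g (w.take i) * h (w.drop i)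
  rw [← Finset.sum_add_distrib]
  exact Finset.sum_congr rfl fun i _ => add_mul _ _ _

lemma zero_mulFun (f : NCS A m) : mulFun 0 f = 0 := by
  funext w
  show ∑ i ∈ Finset.range (w.length + 1), (0 : A) * f (w.drop i) = (0 : A)
  simp

lemma mulFun_zero (f : NCS A m) : mulFun f 0 = 0 := by
  funext w
  show ∑ i ∈ Finset.range (w.length + 1), f (w.take i) * (0 : A) = (0 : A)
  simp

instance instRing : Ring (NCS A m) :=
  { (inferInstance : AddCommGroup (NCS A m)) with
    mul := mulFun
    one := oneFun
    mul_assoc := mulFun_assoc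
    one_mul := oneFun_mulFun
    mul_one := mulFun_oneFun
    left_distrib := mulFun_add
    right_distrib := add_mulFun
    zero_mul := zero_mulFun
    mul_zero := mulFun_zero }

lemma mul_apply (f g : NCS A m) (w : List (Fin m)) :
    (f * g) w = ∑ i ∈ Finset.range (w.length + 1), f (w.take i) * g (w.drop i) := rfl

lemma one_apply (w : List (Fin m)) : (1 : NCS A m) w = if w = [] then (1:A) else 0 := rfl

/-- The variable `Xᵢ` as a power series. -/
def X (i : Fin m) : NCS A m := fun w => if w = [i] then (1:A) else 0

/-- The geometric series `1 - Xᵢ + Xᵢ² - ⋯`, the inverse of `1 + Xᵢ`. -/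
def geo (i : Fin m) : NCS A m :=
  fun w => if w = List.replicate w.length i then (-1 : A) ^ w.length else 0

lemma onePlusX_apply (i : Fin m) (u : List (Fin m)) :
    ((1 + X i : NCS A m)) u = (if u = [] then (1:A) else 0) + (if u = [i] then (1:A) else 0) := rfl

lemma concat_eq_replicate_iff (s : List (Fin m)) (a i : Fin m) :
    s ++ [a] = List.replicate (s.length + 1) i ↔ s = List.replicate s.length i ∧ a = i := by
  rw [List.replicate_succ']
  constructor
  · intro h
    have hl : s.length = (List.replicate s.length i).length := by simp
    obtain ⟨h1, h2⟩ := List.append_inj h hl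
    exact ⟨h1, by simpa using h2⟩
  · rintro ⟨h1, rfl⟩
    rw [← h1]

lemma geo_nil (i : Fin m) : geo i ([] : List (Fin m)) = (1 : A) := by
  unfold geo; simp

lemma geo_cons (i a : Fin m) (s : List (Fin m)) :
    geo i (a :: s) = if a = i then - geo i s else (0 : A) := by
  unfold geo
  by_cases ha : a = i
  · subst ha
    by_cases hs : s = List.replicate s.length a
    · rw [if_pos (by rw [List.length_cons, List.replicate_succ, ← hs]),
        if_pos rfl, if_pos hs, List.length_cons, pow_succ]
      rw [mul_neg_one]
    · rw [if_neg ?_, if_pos rfl, if_neg hs, neg_zero]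
      rw [List.length_cons, List.replicate_succ]
      simp only [List.cons.injEq, true_and]
      exact hs
  · rw [if_neg ?_, if_neg ha]
    rw [List.length_cons, List.replicate_succ]
    simp only [List.cons.injEq]
    tauto

lemma geo_concat (i a : Fin m) (s : List (Fin m)) :
    geo i (s ++ [a]) = if a = i then geo i s * (-1 : A) else 0 := by
  unfold geo
  have hl : (s ++ [a]).length = s.length + 1 := by simp
  rw [hl]
  by_cases ha : a = i
  · subst ha
    by_cases hs : s = List.replicate s.length a
    · rw [if_pos ((concat_eq_replicate_iff s a a).mpr ⟨hs, rfl⟩), if_pos rfl, if_pos hs, pow_succ]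
    · rw [if_neg (fun h => hs ((concat_eq_replicate_iff s a a).mp h).1), if_pos rfl,
        if_neg hs, zero_mul]
  · rw [if_neg (fun h => ha ((concat_eq_replicate_iff s a i).mp h).2), if_neg ha]

lemma onePlusX_mul_geo (i : Fin m) : ((1 + X i) * geo i : NCS A m) = 1 := by
  funext w
  rw [mul_apply]
  cases w with
  | nil => simp [onePlusX_apply, geo_nil, one_apply]
  | cons a s =>
      have h2 : (2 : ℕ) ≤ (a :: s).length + 1 := by simp
      rw [← Finset.sum_subset (Finset.range_subset_range.mpr h2)]
      · rw [Finset.sum_range_succ, Finset.sum_range_one]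
        have ht0 : (a :: s).take 0 = [] := rfl
        have hd0 : (a :: s).drop 0 = a :: s := rfl
        have ht1 : (a :: s).take 1 = [a] := rfl
        have hd1 : (a :: s).drop 1 = s := rfl
        rw [ht0, hd0, ht1, hd1]
        simp only [onePlusX_apply, geo_cons, one_apply]
        by_cases ha : a = i
        · subst ha; simp
        · have h' : ([a] : List (Fin m)) ≠ [i] := by simpa using ha
          simp [ha, h']
      · intro t ht htn
        have h1 : t < (a :: s).length + 1 := Finset.mem_range.mp ht
        have h2' : 2 ≤ t := by
          by_contra h
          exact htn (Finset.mem_range.mpr (by omega))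
        have hlen : ((a :: s).take t).length = t := by
          rw [List.length_take]
          simp only [List.length_cons] at h1 ⊢
          omega
        have hz : ((1 + X i : NCS A m)) ((a :: s).take t) = 0 := by
          rw [onePlusX_apply, if_neg, if_neg, add_zero]
          · intro h; rw [h] at hlen; simp at hlen; omega
          · intro h; rw [h] at hlen; simp at hlen; omega
        rw [hz, zero_mul]

lemma geo_mul_onePlusX (i : Fin m) : (geo i * (1 + X i) : NCS A m) = 1 := by
  funext w
  rw [mul_apply]
  rcases List.eq_nil_or_concat w with rfl | ⟨s, a, rfl⟩
  · simp [onePlusX_apply, geo_nil, one_apply]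
  · simp only [List.concat_eq_append]
    have hlen : (s ++ [a]).length = s.length + 1 := by simp
    have hsub : Finset.Ico s.length (s.length + 2) ⊆ Finset.range ((s ++ [a]).length + 1) := by
      intro t ht
      simp only [Finset.mem_Ico] at ht
      simp only [Finset.mem_range, hlen]
      omega
    rw [← Finset.sum_subset hsub]
    · rw [show s.length + 2 = (s.length + 1) + 1 from rfl,
        Finset.sum_Ico_succ_top (by omega), Finset.sum_Ico_succ_top (by omega),
        Finset.Ico_self, Finset.sum_empty, zero_add]
      have ht1 : (s ++ [a]).take (s.length + 1) = s ++ [a] := by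
        rw [← hlen, List.take_length]
      have hd1 : (s ++ [a]).drop (s.length + 1) = [] := by
        rw [← hlen, List.drop_length]
      have ht0 : (s ++ [a]).take s.length = s := List.take_left
      have hd0 : (s ++ [a]).drop s.length = [a] := List.drop_left
      rw [ht1, hd1, ht0, hd0]
      simp only [onePlusX_apply, geo_concat, one_apply]
      by_cases ha : a = i
      · subst ha; simp
      · have h' : ([a] : List (Fin m)) ≠ [i] := by simpa using ha
        simp [ha, h']
    · intro t ht htn
      simp only [Finset.mem_range, hlen] at ht
      simp only [Finset.mem_Ico] at htn
      have h2' : t < s.length := by omega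
      have hdl : ((s ++ [a]).drop t).length = s.length + 1 - t := by
        rw [List.length_drop, hlen]
      have hz : ((1 + X i : NCS A m)) ((s ++ [a]).drop t) = 0 := by
        rw [onePlusX_apply, if_neg, if_neg, add_zero]
        · intro h; rw [h] at hdl; simp at hdl; omega
        · intro h; rw [h] at hdl; simp at hdl; omega
      rw [hz, mul_zero]

/-- `1 + Xᵢ` as a unit of the power series ring. -/
def unitX (i : Fin m) : (NCS A m)ˣ :=
  ⟨1 + X i, geo i, onePlusX_mul_geo i, geo_mul_onePlusX i⟩

/-- The Magnus expansion, from the free group on `m` generators to the ring of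
non-commutative formal power series in `m` variables over `ℤ`. -/
def E {m : ℕ} : FreeGroup (Fin m) →* NCS ℤ m :=
  (Units.coeHom (NCS ℤ m)).comp (FreeGroup.lift fun i => unitX i)

end NCS

open NCS

/-! Writing `E w = 1 + f`, the series `f` has zero constant term. Since `1` commutes with `f`,
the binomial theorem gives `(1 + f) ^ p = 1 + f ^ p + p * (⋯)` because `p` divides the inner
binomial coefficients, and `f ^ p` has no terms of degree below `p`. -/

namespace NCS

variable {A : Type} [Ring A] {m : ℕ}

def constantCoeff : NCS A m →+* A where
  toFun f := f []
  map_one' := by simp [one_apply]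
  map_mul' f g := by simp [mul_apply]
  map_zero' := rfl
  map_add' _ _ := rfl

@[simp]
theorem constantCoeff_apply (f : NCS A m) : constantCoeff f = f [] := rfl

theorem constantCoeff_E (w : FreeGroup (Fin m)) : constantCoeff (E w) = (1 : ℤ) := by
  have h : (Units.map constantCoeff.toMonoidHom).comp
      (FreeGroup.lift fun i => (unitX i : (NCS ℤ m)ˣ)) = 1 :=
    FreeGroup.ext_hom _ _ fun i => Units.ext <| by simp [unitX, onePlusX_apply]
  simpa [E] using congrArg Units.val (DFunLike.congr_fun h w)

def VanishesBelow (n : ℕ) (f : NCS A m) : Prop :=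
  ∀ u : List (Fin m), u.length < n → f u = 0

theorem vanishesBelow_one_iff {f : NCS A m} : VanishesBelow 1 f ↔ constantCoeff f = 0 :=
  ⟨fun h => h [] Nat.one_pos, fun h u hu => by
    obtain rfl : u = [] := List.length_eq_zero_iff.mp (by omega)
    exact h⟩

theorem VanishesBelow.mul {a b : ℕ} {f g : NCS A m} (hf : VanishesBelow a f)
    (hg : VanishesBelow b g) : VanishesBelow (a + b) (f * g) := by
  intro u hu
  refine (mul_apply f g u).trans <| Finset.sum_eq_zero fun i hi => ?_
  rw [Finset.mem_range] at hi
  rcases lt_or_ge i a with hi | hi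
  · rw [hf _ (by rw [List.length_take]; omega), zero_mul]
  · rw [hg _ (by rw [List.length_drop]; omega), mul_zero]

theorem VanishesBelow.pow {n : ℕ} {f : NCS A m} (hf : VanishesBelow n f) :
    ∀ k : ℕ, VanishesBelow (k * n) (f ^ k)
  | 0 => fun u hu => by simp at hu
  | k + 1 => by
    rw [pow_succ, add_one_mul]
    exact (hf.pow k).mul hf

end NCS

/-- For any word `w` in the free group on `m` generators and any prime `p`, the Magnus
expansion of `w ^ p` is congruent, modulo the ideal generated by `p` in `ℤ⟨⟨X₁,…,X_m⟩⟩`,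
to `1` plus terms of degree at least `p`. -/
theorem magnus_pow_prime (m p : ℕ) (hp : p.Prime) (w : FreeGroup (Fin m)) :
    ∃ c d : NCS ℤ m, E (w ^ p) - 1 = (p : NCS ℤ m) * c + d ∧
      ∀ u : List (Fin m), u.length < p → d u = 0 := by
  set f := E w - 1
  have hEw : E w = 1 + f := (add_sub_cancel 1 (E w)).symm
  have hf : VanishesBelow 1 f := vanishesBelow_one_iff.mpr <| by
    rw [map_sub, constantCoeff_E, map_one, sub_self]
  obtain ⟨r, hr⟩ := (Commute.one_left f).exists_add_pow_prime_eq hp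
  refine ⟨f * r, f ^ p, ?_, ?_⟩
  · rw [map_pow, hEw, hr, one_pow, mul_one, mul_assoc]
    abel
  · show VanishesBelow p (f ^ p)
    simpa only [mul_one] using hf.pow p
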